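/- The generalized Stirling numbers of the first and second kinds are orthogonal: for all natural numbers k and l, Σ_{r=0}^{k} c(k,r)·S(r,l) = δ_{k,l} (Kronecker delta), where c(k,r) denotes the coefficient of X^r in the polynomial ∏_{i=0}^{k-1} (X − a(i)). -/

import Mathlib

/-- Generalized (Comtet/ψ~-) Stirling numbers of the second kind associated with
the sequence `a`. -/
def genStirling {K : Type*} [CommRing K] (a : ℕ → K) : ℕ → ℕ → K
  | 0, 0 => 1
  | 0, _ + 1 => 0
  | _ + 1, 0 => 0
  | n + 1, k + 1 => genStirling a n k + a (k + 1) * genStirling a n (k + 1)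

/-- The generalized Stirling numbers of the first kind: `c(k,r)` is the coefficient of `X^r`
in `∏_{i=0}^{k-1} (X − a(i))`. -/
noncomputable def genStirlingFirst {K : Type*} [CommRing K] (a : ℕ → K) (k r : ℕ) : K :=
  (∏ i ∈ Finset.range k, (Polynomial.X - Polynomial.C (a i))).coeff r

open Polynomial Finset in
lemma genStirlingFirst_top_zero {K : Type*} [CommRing K] (a : ℕ → K) (k : ℕ) :
    genStirlingFirst a k (k + 1) = 0 := by
  unfold genStirlingFirst
  apply Polynomial.coeff_eq_zero_of_natDegree_lt
  have h : (∏ i ∈ range k, (X - C (a i))).natDegree ≤ k := by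
    refine le_trans (Polynomial.natDegree_prod_le _ _) ?_
    refine le_trans (Finset.sum_le_sum (fun i _ => Polynomial.natDegree_X_sub_C_le (a i))) ?_
    simp
  omega

/-- orthogonality of the generalized Stirling numbers of the first and
second kinds: `Σ_{r=0}^{k} c(k,r)·S(r,l) = δ_{k,l}`. -/
theorem genStirling_orthogonality {K : Type*} [CommRing K] (a : ℕ → K) (ha : a 0 = 0)
    (k l : ℕ) :
    ∑ r ∈ Finset.range (k + 1), genStirlingFirst a k r * genStirling a r l =
      if k = l then 1 else 0 := by
  induction k generalizing l with
  | zero =>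
    cases l with
    | zero => simp [genStirlingFirst, genStirling]
    | succ m => simp [genStirlingFirst, genStirling]
  | succ k ih =>
    have hcoeff : ∀ r, genStirlingFirst a (k + 1) r =
        ((∏ i ∈ Finset.range k, (Polynomial.X - Polynomial.C (a i))) * Polynomial.X).coeff r
          - genStirlingFirst a k r * a k := by
      intro r
      unfold genStirlingFirst
      rw [Finset.prod_range_succ, mul_sub, Polynomial.coeff_sub, Polynomial.coeff_mul_C]
    have hsplit : ∑ r ∈ Finset.range (k + 2), genStirlingFirst a (k + 1) r * genStirling a r l
        = (∑ r ∈ Finset.range (k + 2),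
            ((∏ i ∈ Finset.range k, (Polynomial.X - Polynomial.C (a i))) * Polynomial.X).coeff r
              * genStirling a r l)
          - a k * ∑ r ∈ Finset.range (k + 2), genStirlingFirst a k r * genStirling a r l := by
      rw [Finset.mul_sum, ← Finset.sum_sub_distrib]
      apply Finset.sum_congr rfl
      intro r _
      rw [hcoeff r]
      ring
    have hsecond : ∑ r ∈ Finset.range (k + 2), genStirlingFirst a k r * genStirling a r l
        = if k = l then 1 else 0 := by
      rw [Finset.sum_range_succ, genStirlingFirst_top_zero, zero_mul, add_zero, ih l]
    have hfirst : ∑ r ∈ Finset.range (k + 2),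
        ((∏ i ∈ Finset.range k, (Polynomial.X - Polynomial.C (a i))) * Polynomial.X).coeff r
          * genStirling a r l
        = ∑ r ∈ Finset.range (k + 1), genStirlingFirst a k r * genStirling a (r + 1) l := by
      rw [Finset.sum_range_succ']
      simp [Polynomial.coeff_mul_X, genStirlingFirst, Polynomial.mul_coeff_zero]
    rw [hsplit, hsecond, hfirst]
    cases l with
    | zero =>
      have hz : ∀ r, genStirling a (r + 1) 0 = 0 := fun r => rfl
      simp only [hz, mul_zero, Finset.sum_const_zero, zero_sub]
      rcases Nat.eq_zero_or_pos k with hk | hk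
      · subst hk; simp [ha]
      · have : ¬ (k = 0) := by omega
        simp [this]
    | succ m =>
      have hrec : ∀ r, genStirling a (r + 1) (m + 1)
          = genStirling a r m + a (m + 1) * genStirling a r (m + 1) := fun r => rfl
      simp only [hrec]
      have : ∑ r ∈ Finset.range (k + 1), genStirlingFirst a k r *
            (genStirling a r m + a (m + 1) * genStirling a r (m + 1))
          = (∑ r ∈ Finset.range (k + 1), genStirlingFirst a k r * genStirling a r m)
            + a (m + 1) * ∑ r ∈ Finset.range (k + 1),
                genStirlingFirst a k r * genStirling a r (m + 1) := by
        rw [Finset.mul_sum, ← Finset.sum_add_distrib]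
        apply Finset.sum_congr rfl
        intro r _
        ring
      rw [this, ih m, ih (m + 1)]
      rcases eq_or_ne k m with h | h
      · subst h
        have : ¬ (k = k + 1) := by omega
        simp [this]
      · rcases eq_or_ne k (m + 1) with h2 | h2
        · subst h2
          have : ¬ (m + 1 = m) := by omega
          have h3 : ¬ (m + 1 + 1 = m + 1) := by omega
          simp [this, h3]
        · have h3 : ¬ (k + 1 = m + 1) := by omega
          simp [h, h2, h3]
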